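/- arXiv:1207.5599 — 2 statements merged into one kernel-verified Lean document; each statement's English description precedes it below -/
import Mathlib

section
/- For any three non-negative integers p, q, r, the identity ∑_{i=0}^{p} C(p,i) / C(p+q+r, r+i) = ((p+q+r+1)/(q+r+1)) · (1 / C(q+r, r)) holds, where C(n,k) denotes the binomial coefficient. -/
/-!
Each summand factors as
`C(p,i) / C(n,r+i) = C(r+i,r) C(q+p-i,q) / (C(n,p) C(q+r,r))` with `n = p+q+r`, since
`C(n,r+i) C(r+i,r) C(q+p-i,q)` and `C(n,p) C(q+r,r) C(p,i)` are both the multinomial coefficient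
`n! / (i! (p-i)! q! r!)`. The numerators sum to `C(n+1,q+r+1)` by the upper Chu–Vandermonde
identity, read off from `(1-X)^{-(r+1)} (1-X)^{-(q+1)} = (1-X)^{-(q+r+2)}`, and
`C(n+1,q+r+1) / C(n,q+r) = (n+1)/(q+r+1)`.
-/

open Finset PowerSeries

theorem Nat.sum_antidiagonal_add_choose_mul_add_choose (a b n : ℕ) :
    ∑ ij ∈ antidiagonal n, (a + ij.1).choose a * (b + ij.2).choose b =
      (n + a + b + 1).choose (a + b + 1) := by
  have h : invOneSubPow ℤ (a + b + 1 + 1) = invOneSubPow ℤ (a + 1) * invOneSubPow ℤ (b + 1) := by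
    rw [← invOneSubPow_add]
    congr 1
    omega
  have hcoeff := congrArg (fun f : ℤ⟦X⟧ ↦ coeff n f) (congrArg Units.val h)
  simp only [Units.val_mul, coeff_mul, invOneSubPow_val_succ_eq_mk_add_choose, coeff_mk]
    at hcoeff
  rw [show n + a + b + 1 = a + b + 1 + n by omega]
  exact_mod_cast hcoeff.symm

theorem Nat.choose_mul_choose_mul_choose_comm (i j q r : ℕ) :
    (i + j).choose i * ((i + j + q + r).choose (i + j) * (q + r).choose r) =
      (r + i).choose r * (q + j).choose q * (i + j + q + r).choose (r + i) := by
  rw [← Nat.cast_inj (R := ℚ)]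
  push_cast
  rw [cast_choose ℚ (show r + i ≤ i + j + q + r by omega),
    cast_choose ℚ (show i + j ≤ i + j + q + r by omega), cast_choose ℚ (Nat.le_add_right r i),
    cast_choose ℚ (Nat.le_add_right q j), cast_choose ℚ (Nat.le_add_left r q),
    cast_choose ℚ (Nat.le_add_right i j), show i + j + q + r - (r + i) = q + j by omega,
    show i + j + q + r - (i + j) = q + r by omega, Nat.add_sub_cancel_left,
    Nat.add_sub_cancel_left, Nat.add_sub_cancel, Nat.add_sub_cancel_left]
  field_simp

section Field

variable {K : Type*} [Field K] [CharZero K]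

theorem Nat.cast_choose_ne_zero {n k : ℕ} (hk : k ≤ n) : (n.choose k : K) ≠ 0 :=
  Nat.cast_ne_zero.mpr (Nat.choose_pos hk).ne'

theorem Nat.cast_choose_div_cast_choose_add {p i : ℕ} (hi : i ≤ p) (q r : ℕ) :
    (p.choose i : K) / (p + q + r).choose (r + i) =
      (r + i).choose r * (q + (p - i)).choose q / ((p + q + r).choose p * (q + r).choose r) := by
  obtain ⟨j, rfl⟩ := Nat.exists_eq_add_of_le hi
  rw [Nat.add_sub_cancel_left, div_eq_div_iff (Nat.cast_choose_ne_zero (by omega))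
    (mul_ne_zero (Nat.cast_choose_ne_zero (by omega)) (Nat.cast_choose_ne_zero (by omega)))]
  exact_mod_cast Nat.choose_mul_choose_mul_choose_comm i j q r

theorem Nat.cast_add_one_choose_div_cast_choose {n k : ℕ} (hk : k ≤ n) :
    ((n + 1).choose (k + 1) : K) / n.choose k = (n + 1) / (k + 1) := by
  rw [div_eq_div_iff (Nat.cast_choose_ne_zero hk) (Nat.cast_add_one_ne_zero k)]
  exact_mod_cast (Nat.add_one_mul_choose_eq n k).symm

end Field

/-- The binomial identity
`∑_{i=0}^{p} C(p,i) / C(p+q+r, r+i) = ((p+q+r+1)/(q+r+1)) · (1 / C(q+r, r))`,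
taken over the rationals. -/
theorem binomial_reciprocal_sum_identity (p q r : ℕ) :
    ∑ i ∈ Finset.range (p + 1),
        (p.choose i : ℚ) / ((p + q + r).choose (r + i) : ℚ) =
      ((p : ℚ) + q + r + 1) / ((q : ℚ) + r + 1) * (1 / ((q + r).choose r : ℚ)) := by
  calc ∑ i ∈ range (p + 1), (p.choose i : ℚ) / (p + q + r).choose (r + i)
      = (∑ ij ∈ antidiagonal p, ((r + ij.1).choose r * (q + ij.2).choose q : ℚ)) /
          ((p + q + r).choose (q + r) * (q + r).choose r) := by
        rw [Nat.sum_antidiagonal_eq_sum_range_succ_mk, sum_div, add_assoc, ← Nat.choose_symm_add,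
          ← add_assoc]
        exact sum_congr rfl fun i hi ↦
          Nat.cast_choose_div_cast_choose_add (Nat.lt_succ_iff.mp (mem_range.mp hi)) q r
    _ = ((p + q + r + 1).choose (q + r + 1) : ℚ) / (p + q + r).choose (q + r) /
          (q + r).choose r := by
        have hV := Nat.sum_antidiagonal_add_choose_mul_add_choose r q p
        rw [add_right_comm p r q, add_comm r q] at hV
        rw [div_div, ← hV]
        push_cast
        rfl
    _ = ((p : ℚ) + q + r + 1) / ((q : ℚ) + r + 1) * (1 / ((q + r).choose r : ℚ)) := by
        rw [Nat.cast_add_one_choose_div_cast_choose (by omega)]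
        push_cast
        ring
end

section
/- Let X be a 2-neighbourly simplicial complex of dimension d on m vertices. Then for 0 ≤ i ≤ d, the mu-vector of X satisfies μ_i = (1/m) ∑_{j=1}^{m} (1/C(m−1, j−1)) ∑_{A ⋖ B ⊆ V(X), |B| = j} β_i(X[B], X[A]), where the inner sum is over all pairs of subsets A ⊆ B of V(X) with |B∖A| = 1, and β_i(X[B], X[A]) = dim H_i(X[B], X[A]; F). -/
open Finset

/-- An abstract simplicial complex on vertex type `V` (faces include `∅` when nonempty). -/
structure SC (V : Type) where
  faces : Finset (Finset V)
  down_closed : ∀ s ∈ faces, ∀ t, t ⊆ s → t ∈ faces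

namespace SC

variable {V : Type} [LinearOrder V] (F : Type) [Field F]

/-- The vertex set. -/
def verts (K : SC V) : Finset V := K.faces.sup id

/-- The faces of cardinality `n` (i.e. of dimension `n-1`). -/
def cf (K : SC V) (n : ℕ) : Finset (Finset V) :=
  K.faces.filter fun s => s.card = n

/-- The induced subcomplex on a vertex set `A`. -/
def ind (K : SC V) (A : Finset V) : SC V where
  faces := K.faces.filter fun s => s ⊆ A
  down_closed := by
    intro s hs t hts
    simp only [mem_filter] at hs ⊢
    exact ⟨K.down_closed s hs.1 t hts, hts.trans hs.2⟩

/-- The link of a vertex `x`. -/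
def lk (K : SC V) (x : V) : SC V where
  faces := (K.faces.filter fun s => x ∈ s).image fun s => s.erase x
  down_closed := by
    intro s hs t hts
    simp only [mem_image, mem_filter] at hs ⊢
    obtain ⟨u, ⟨hu, hxu⟩, rfl⟩ := hs
    have hxt : x ∉ t := fun hx => (Finset.notMem_erase x u) (hts hx)
    refine ⟨insert x t, ⟨K.down_closed u hu _ ?_, mem_insert_self _ _⟩,
      by rw [Finset.erase_insert hxt]⟩
    intro y hy
    rcases Finset.mem_insert.1 hy with rfl | hy
    · exact hxu
    · exact (Finset.erase_subset x u) (hts hy)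

/-- Union of two complexes. -/
def union (K L : SC V) : SC V where
  faces := K.faces ∪ L.faces
  down_closed := by
    intro s hs t hts
    rcases Finset.mem_union.1 hs with h | h
    · exact Finset.mem_union.2 (Or.inl (K.down_closed s h t hts))
    · exact Finset.mem_union.2 (Or.inr (L.down_closed s h t hts))

/-- Intersection of two complexes. -/
def inter (K L : SC V) : SC V where
  faces := K.faces ∩ L.faces
  down_closed := by
    intro s hs t hts
    have h := Finset.mem_inter.1 hs
    exact Finset.mem_inter.2 ⟨K.down_closed s h.1 t hts, L.down_closed s h.2 t hts⟩

/-- The orientation sign with which the face `t` occurs in the boundary of the face `s`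
(using the linear order on the vertices to orient the simplices). -/
def coeff (s t : Finset V) : F :=
  if t ⊆ s then ∑ v ∈ s \ t, (-1 : F) ^ (t.filter (· < v)).card else 0

/-- A generic boundary-type linear map between chain groups spanned by
two finite collections of faces. -/
noncomputable def bd (A B : Finset (Finset V)) :
    ({s // s ∈ A} → F) →ₗ[F] ({s // s ∈ B} → F) where
  toFun f := fun t => ∑ s : {s // s ∈ A}, coeff F s.1 t.1 * f s
  map_add' f g := by
    funext t
    simp [mul_add, Finset.sum_add_distrib]
  map_smul' c f := by
    funext t
    simp only [Pi.smul_apply, smul_eq_mul, RingHom.id_apply, Finset.mul_sum]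
    exact Finset.sum_congr rfl fun s _ => by ring

/-- The group of simplicial `n`-chains of `K` with coefficients in `F`. -/
abbrev Ch (K : SC V) (n : ℕ) : Type := {s // s ∈ K.cf (n + 1)} → F

/-- The simplicial boundary operator from degree `n` to degree `n-1`
(the zero map in degree `0`). -/
noncomputable def D (K : SC V) : (n : ℕ) → Ch F K n →ₗ[F] Ch F K (n - 1)
  | 0 => 0
  | (n + 1) => bd F (K.cf (n + 2)) (K.cf (n + 1))

/-- The `n`-th Betti number of `K` over `F` :
`dim ker ∂ₙ - dim im ∂ₙ₊₁` (an integer). -/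
noncomputable def betti (K : SC V) (n : ℕ) : ℤ :=
  (Module.finrank F (LinearMap.ker (D F K n)) : ℤ) -
    (Module.finrank F (LinearMap.range (D F K (n + 1))) : ℤ)

/-- The `n`-th reduced Betti number of `K` over `F`.  (With this convention the
reduced Betti number in degree `0` of the trivial complex `{∅}` is `-1`.) -/
noncomputable def rbetti (K : SC V) (n : ℕ) : ℤ :=
  betti F K n - if n = 0 then 1 else 0

/-- The sigma-vector of `K`:  a weighted average of the reduced Betti numbers of the
induced subcomplexes of `K`. -/
noncomputable def sigma (K : SC V) (i : ℕ) : ℚ :=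
  ∑ j ∈ Finset.range (K.verts.card + 1),
    (1 / (K.verts.card.choose j : ℚ)) *
      ∑ A ∈ K.verts.powersetCard j, (rbetti F (K.ind A) i : ℚ)

/-- The mu-vector of `K`:  `μ₀ = 1` and
`μᵢ = δ_{i1} + (1/m) ∑_{x ∈ V(K)} σ_{i-1}(lk_K x)` for `i ≥ 1`. -/
noncomputable def mu (K : SC V) (i : ℕ) : ℚ :=
  if i = 0 then 1
  else (if i = 1 then 1 else 0) +
    (1 / (K.verts.card : ℚ)) * ∑ x ∈ K.verts, sigma F (K.lk x) (i - 1)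

/-- `K` has dimension exactly `d`. -/
def dimIs (K : SC V) (d : ℕ) : Prop :=
  (∃ s ∈ K.faces, s.card = d + 1) ∧ ∀ s ∈ K.faces, s.card ≤ d + 1

/-- `K` has the reduced homology of the `d`-sphere over `F`. -/
def sphereBetti (K : SC V) (d : ℕ) : Prop :=
  ∀ i, rbetti F K i = if i = d then 1 else 0

/-- A triangulated `F`-homology `d`-sphere:  it has the homology of `S^d`, and
(recursively) all its vertex links are homology `(d-1)`-spheres. -/
def IsHomologySphere : (d : ℕ) → SC V → Prop
  | 0, K => dimIs K 0 ∧ sphereBetti F K 0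
  | (d + 1), K => dimIs K (d + 1) ∧ sphereBetti F K (d + 1) ∧
      ∀ x ∈ K.verts, IsHomologySphere d (K.lk x)

/-- A triangulated closed `d`-manifold: all vertex links are homology `(d-1)`-spheres
(for `d = 0`, all vertex links are the trivial complex `{∅}`). -/
def IsClosedManifold : (d : ℕ) → SC V → Prop
  | 0, K => dimIs K 0 ∧ ∀ x ∈ K.verts, (K.lk x).faces = {∅}
  | (d + 1), K => dimIs K (d + 1) ∧ ∀ x ∈ K.verts, IsHomologySphere F d (K.lk x)

/-- Connectedness: nonempty, and any two vertices are joined by a path of edges. -/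
def Connected (K : SC V) : Prop :=
  K.verts.Nonempty ∧ ∀ x ∈ K.verts, ∀ y ∈ K.verts,
    Relation.ReflTransGen (fun a b => ({a, b} : Finset V) ∈ K.faces) x y

/-- `K` is `l`-neighbourly: every `l` vertices of `K` form a face. -/
def Neighbourly (K : SC V) (l : ℕ) : Prop :=
  ∀ A ⊆ K.verts, A.card = l → A ∈ K.faces

/-- The inclusion-induced map on chains (for `K` a subcomplex of `L`). -/
noncomputable def inclCh (K L : SC V) (n : ℕ) (f : Ch F K n) : Ch F L n :=
  fun s => if h : s.1 ∈ K.cf (n + 1) then f ⟨s.1, h⟩ else 0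

/-- The inclusion-induced morphism `H_j(K; F) → H_j(L; F)` is injective
(for `K` a subcomplex of `L`):  every `j`-cycle of `K` which bounds in `L`
already bounds in `K`. -/
def HomInj (K L : SC V) (j : ℕ) : Prop :=
  ∀ z : Ch F K j, D F K j z = 0 →
    (∃ w, D F L (j + 1) w = inclCh F K L j z) → ∃ w, D F K (j + 1) w = z

/-- `K` is `F`-tight: connected, and all inclusion-induced maps on homology from
induced subcomplexes are injective. -/
def IsTight (K : SC V) : Prop :=
  K.Connected ∧ ∀ A ⊆ K.verts, ∀ j, HomInj F (K.ind A) K j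

/-- The faces of cardinality `n` of `K` not lying in the subcomplex `L`:
a basis of the relative chain group in dimension `n-1`. -/
def rcf (K L : SC V) (n : ℕ) : Finset (Finset V) :=
  (K.cf n).filter fun s => s ∉ L.faces

/-- Relative chains of the pair `(K, L)`. -/
abbrev RelCh (K L : SC V) (n : ℕ) : Type := {s // s ∈ K.rcf L (n + 1)} → F

/-- The boundary operator of the relative chain complex of the pair `(K, L)`. -/
noncomputable def relD (K L : SC V) : (n : ℕ) → RelCh F K L n →ₗ[F] RelCh F K L (n - 1)
  | 0 => 0
  | (n + 1) => bd F (K.rcf L (n + 2)) (K.rcf L (n + 1))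

/-- The `n`-th relative Betti number `dim H_n(K, L; F)` of the pair `(K, L)`. -/
noncomputable def relBetti (K L : SC V) (n : ℕ) : ℤ :=
  (Module.finrank F (LinearMap.ker (relD F K L n)) : ℤ) -
    (Module.finrank F (LinearMap.range (relD F K L (n + 1))) : ℤ)

/-- The standard `d`-sphere `S^d_{d+2}`: the boundary of a `(d+1)`-simplex. -/
def IsStdSphere (d : ℕ) (K : SC V) : Prop :=
  ∃ W : Finset V, W.card = d + 2 ∧ ∀ s : Finset V, s ∈ K.faces ↔ s ⊆ W ∧ s ≠ W

/-- `Y` is obtained from the `d`-dimensional complex `X` by the bistellar move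
`α ↦ β` of index `i`. -/
def BMove (d i : ℕ) (X Y : SC V) : Prop :=
  ∃ α β : Finset V, Disjoint α β ∧ α.card + i = d + 1 ∧ β.card = i + 1 ∧
    (∀ γ, γ ⊆ α ∪ β → (γ ∈ X.faces ↔ ¬ β ⊆ γ)) ∧
    (∀ γ : Finset V, γ ∈ Y.faces ↔
      ((γ ∈ X.faces ∧ ¬ (γ ⊆ α ∪ β ∧ ¬ β ⊆ γ)) ∨ (γ ⊆ α ∪ β ∧ ¬ α ⊆ γ)))

/-- `S` is a `k`-stellated `d`-sphere: obtainable from the standard `d`-sphere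
by a finite sequence of bistellar moves, each of index `< k`. -/
def IsKStellated (k d : ℕ) (S : SC V) : Prop :=
  ∃ S₀ : SC V, IsStdSphere d S₀ ∧
    Relation.ReflTransGen (fun X Y => ∃ i, i < k ∧ BMove d i X Y) S₀ S

/-- The geometric realization of `K`, as a subspace of `V → ℝ`. -/
def space (K : SC V) : Set (V → ℝ) :=
  {f | (∀ v, 0 ≤ f v) ∧ ∃ s ∈ K.faces, (∀ v, f v ≠ 0 ↔ v ∈ s) ∧ ∑ v ∈ s, f v = 1}

/-- `K` is a triangulated `e`-ball: its geometric realization is homeomorphic to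
the closed unit ball of `ℝᵉ`. -/
def IsBall (e : ℕ) (K : SC V) : Prop :=
  Nonempty (K.space ≃ₜ (Metric.closedBall (0 : EuclideanSpace ℝ (Fin e)) 1))

/-- `K` is a triangulated `(e-1)`-sphere: its geometric realization is homeomorphic
to the unit sphere of `ℝᵉ` (which is empty, `S^{-1}`, when `e = 0`). -/
def IsSphereDim (e : ℕ) (K : SC V) : Prop :=
  Nonempty (K.space ≃ₜ (Metric.sphere (0 : EuclideanSpace ℝ (Fin e)) 1))

end SC

/-!
For `x ∉ A`, every face of `X[A ∪ {x}]` outside `X[A]` contains `x`, and `s ↦ s ∖ {x}` identifies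
the relative chain complex of `(X[A ∪ {x}], X[A])`, up to the signs `(-1)^#{w ∈ s | x < w}`, with
the augmented chain complex of `L = lk_X(x)[A]` shifted up by one degree. Since `rbetti` is not
computed from the augmented complex, this gives `β_i(X[A ∪ {x}], X[A]) = β̃_{i-1}(L)` for `i ≥ 2`,
`β_1 = β̃_0(L) + [A = ∅]` and `β_0 = [A = ∅]`: for 2-neighbourly `X` the link `L` has a vertex
exactly when `A ≠ ∅`. Grouping the pairs `A ⋖ B` by the vertex `x = B ∖ A` and using
`V(lk_X x) = V(X) ∖ {x}`, the right-hand side becomes `(1/m) ∑_x σ_{i-1}(lk_X x) + [i ≤ 1] = μ_i`.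
-/

namespace LinearMap

lemma finrank_ker_eq_of_comm {K M₁ M₂ N₁ N₂ : Type*} [Field K] [AddCommGroup M₁] [Module K M₁]
    [AddCommGroup M₂] [Module K M₂] [AddCommGroup N₁] [Module K N₁] [AddCommGroup N₂] [Module K N₂]
    (e₁ : M₁ ≃ₗ[K] M₂) (e₂ : N₁ ≃ₗ[K] N₂) {f : M₁ →ₗ[K] N₁} {g : M₂ →ₗ[K] N₂}
    (h : ∀ m, e₂ (f m) = g (e₁ m)) :
    Module.finrank K (ker f) = Module.finrank K (ker g) := by
  have hg : g.comp e₁.toLinearMap = e₂.toLinearMap.comp f := ext fun m => (h m).symm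
  rw [← LinearEquiv.ker_comp e₂ f, ← hg, ker_comp, Submodule.comap_equiv_eq_map_symm,
    LinearEquiv.finrank_map_eq]

lemma finrank_range_eq_of_comm {K M₁ M₂ N₁ N₂ : Type*} [Field K] [AddCommGroup M₁] [Module K M₁]
    [AddCommGroup M₂] [Module K M₂] [AddCommGroup N₁] [Module K N₁] [AddCommGroup N₂] [Module K N₂]
    (e₁ : M₁ ≃ₗ[K] M₂) (e₂ : N₁ ≃ₗ[K] N₂) {f : M₁ →ₗ[K] N₁} {g : M₂ →ₗ[K] N₂}
    (h : ∀ m, e₂ (f m) = g (e₁ m)) :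
    Module.finrank K (range f) = Module.finrank K (range g) := by
  have hg : g.comp e₁.toLinearMap = e₂.toLinearMap.comp f := ext fun m => (h m).symm
  rw [← LinearEquiv.range_comp e₁ g, hg, range_comp, LinearEquiv.finrank_map_eq]

end LinearMap

namespace Finset

theorem sum_powersetCard_succ_pairs {α M : Type*} [DecidableEq α] [AddCommMonoid M]
    (S : Finset α) (j : ℕ) (g : Finset α → Finset α → M) :
    ∑ B ∈ S.powersetCard (j + 1), ∑ A ∈ B.powersetCard j, g B A =
      ∑ y ∈ S, ∑ C ∈ (S.erase y).powersetCard j, g (insert y C) C := by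
  rw [sum_sigma', sum_sigma']
  symm
  refine sum_bij (fun p _ => ⟨insert p.1 p.2, p.2⟩) ?_ ?_ ?_ fun _ _ => rfl
  · rintro ⟨y, C⟩ h
    simp only [mem_sigma, mem_powersetCard, subset_erase] at h ⊢
    obtain ⟨hy, ⟨hCS, hyC⟩, hC⟩ := h
    exact ⟨⟨insert_subset hy hCS, by rw [card_insert_of_notMem hyC, hC]⟩, subset_insert y C, hC⟩
  · rintro ⟨y, C⟩ h ⟨y', C'⟩ h' heq
    simp only [Sigma.mk.injEq, heq_eq_eq] at heq
    obtain ⟨hins, rfl⟩ := heq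
    simp only [mem_sigma, mem_powersetCard, subset_erase] at h h'
    have : y ∈ insert y' C := hins ▸ mem_insert_self y C
    rw [mem_insert] at this
    rcases this with rfl | hyC
    · rfl
    · exact absurd hyC h.2.1.2
  · rintro ⟨B, A⟩ h
    simp only [mem_sigma, mem_powersetCard] at h
    obtain ⟨⟨hBS, hB⟩, hAB, hA⟩ := h
    obtain ⟨y, hy⟩ : (B \ A).Nonempty := by
      rw [← card_pos, card_sdiff_of_subset hAB]
      omega
    obtain ⟨hyB, hyA⟩ := mem_sdiff.1 hy
    have hins : insert y A = B :=
      eq_of_subset_of_card_le (insert_subset hyB hAB) (by rw [card_insert_of_notMem hyA]; omega)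
    refine ⟨⟨y, A⟩, ?_, by simp [hins]⟩
    simp only [mem_sigma, mem_powersetCard, subset_erase]
    exact ⟨hBS hyB, ⟨hAB.trans hBS, hyA⟩, hA⟩

end Finset

namespace SC

section LevelAverage

variable {α : Type*}

/-- `∑_j` of the average of `f` over the `j`-subsets of `S`; `σ_i(K)` is this sum for
`f = β̃_i(K[·])`. -/
noncomputable def sumLevelAvg (S : Finset α) (f : Finset α → ℚ) : ℚ :=
  ∑ j ∈ range (#S + 1), 1 / ((#S).choose j : ℚ) * ∑ A ∈ S.powersetCard j, f A

lemma sumLevelAvg_congr {S : Finset α} {f g : Finset α → ℚ} (h : ∀ A ⊆ S, f A = g A) :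
    sumLevelAvg S f = sumLevelAvg S g :=
  sum_congr rfl fun _ _ => congrArg _ <| sum_congr rfl fun A hA => h A (mem_powersetCard.1 hA).1

lemma sumLevelAvg_add (S : Finset α) (f g : Finset α → ℚ) :
    sumLevelAvg S (fun A => f A + g A) = sumLevelAvg S f + sumLevelAvg S g := by
  simp only [sumLevelAvg, sum_add_distrib, mul_add]

lemma sumLevelAvg_indicator_empty [DecidableEq α] (S : Finset α) :
    sumLevelAvg S (fun A => if A = ∅ then 1 else 0) = 1 := by
  rw [sumLevelAvg, sum_eq_single 0]
  · simp
  · intro j _ hj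
    rw [sum_eq_zero fun A hA => if_neg ?_, mul_zero]
    rintro rfl
    exact hj (mem_powersetCard.1 hA).2.symm
  · simp

lemma sum_Icc_choose_pairs_eq_sum_sumLevelAvg [DecidableEq α] (S : Finset α)
    (g : Finset α → Finset α → ℚ) :
    ∑ j ∈ Icc 1 #S, 1 / ((#S - 1).choose (j - 1) : ℚ) *
        ∑ B ∈ S.powersetCard j, ∑ A ∈ B.powersetCard (j - 1), g B A =
      ∑ y ∈ S, sumLevelAvg (S.erase y) fun C => g (insert y C) C := by
  calc _ = ∑ j ∈ range #S, ∑ y ∈ S,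
        1 / ((#S - 1).choose j : ℚ) * ∑ C ∈ (S.erase y).powersetCard j, g (insert y C) C := by
        rw [← Ico_add_one_right_eq_Icc, sum_Ico_eq_sum_range, Nat.add_sub_cancel]
        refine sum_congr rfl fun j _ => ?_
        rw [add_comm 1 j, Nat.add_sub_cancel, Finset.sum_powersetCard_succ_pairs, mul_sum]
    _ = _ := by
        rw [sum_comm]
        refine sum_congr rfl fun y hy => ?_
        rw [sumLevelAvg, card_erase_add_one hy, card_erase_of_mem hy]

end LevelAverage

variable {V : Type}

lemma mem_cf {K : SC V} {n : ℕ} {s : Finset V} :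
    s ∈ K.cf n ↔ s ∈ K.faces ∧ #s = n := mem_filter

lemma cf_zero_eq_singleton_empty {K : SC V} {s : Finset V} (hs : s ∈ K.faces) :
    K.cf 0 = {∅} := by
  ext t
  rw [mem_cf, card_eq_zero, mem_singleton]
  exact ⟨And.right, fun ht => ⟨ht ▸ K.down_closed s hs ∅ (empty_subset s), ht⟩⟩

variable [LinearOrder V] (F : Type) [Field F]

lemma mem_verts_iff {K : SC V} {v : V} : v ∈ K.verts ↔ ∃ s ∈ K.faces, v ∈ s := by
  simp [verts, Finset.mem_sup]

lemma mem_ind_faces {K : SC V} {A s : Finset V} :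
    s ∈ (K.ind A).faces ↔ s ∈ K.faces ∧ s ⊆ A := mem_filter

lemma mem_rcf {K L : SC V} {n : ℕ} {s : Finset V} :
    s ∈ K.rcf L n ↔ (s ∈ K.faces ∧ #s = n) ∧ s ∉ L.faces := by
  rw [rcf, mem_filter, mem_cf]

lemma mem_lk_faces {K : SC V} {x : V} {t : Finset V} :
    t ∈ (K.lk x).faces ↔ x ∉ t ∧ insert x t ∈ K.faces := by
  simp only [lk, mem_image, mem_filter]
  constructor
  · rintro ⟨u, ⟨hu, hxu⟩, rfl⟩
    exact ⟨notMem_erase x u, by rwa [insert_erase hxu]⟩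
  · rintro ⟨hxt, hins⟩
    exact ⟨insert x t, ⟨hins, mem_insert_self x t⟩, erase_insert hxt⟩

lemma pair_mem_faces {K : SC V} (h2 : K.Neighbourly 2) {x v : V} (hx : x ∈ K.verts)
    (hv : v ∈ K.verts) (hxv : x ≠ v) : {x, v} ∈ K.faces :=
  h2 _ (insert_subset hx (singleton_subset_iff.2 hv)) (card_pair hxv)

lemma verts_lk (K : SC V) (h2 : K.Neighbourly 2) {x : V} (hx : x ∈ K.verts) :
    (K.lk x).verts = K.verts.erase x := by
  ext v
  simp only [mem_erase, mem_verts_iff, mem_lk_faces]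
  constructor
  · rintro ⟨t, ⟨hxt, ht⟩, hvt⟩
    exact ⟨fun h => hxt (h ▸ hvt), insert x t, ht, mem_insert_of_mem hvt⟩
  · rintro ⟨hvx, hv⟩
    refine ⟨{v}, ⟨by simpa using hvx.symm, ?_⟩, mem_singleton_self v⟩
    exact pair_mem_faces h2 hx (mem_verts_iff.2 hv) (Ne.symm hvx)

lemma coeff_insert_self {v : V} {t : Finset V} (hvt : v ∉ t) :
    coeff F (insert v t) t = (-1) ^ #(t.filter (· < v)) := by
  rw [coeff, if_pos (subset_insert v t), insert_sdiff_cancel hvt, sum_singleton]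

lemma neg_one_pow_mul_self_mul (k : ℕ) (c : F) : (-1 : F) ^ k * ((-1) ^ k * c) = c := by
  rw [← mul_assoc, ← mul_pow]
  norm_num

lemma coeff_insert_insert {x : V} {t t' : Finset V} (hxt : x ∉ t) (hxt' : x ∉ t')
    (hcard : #t' = #t + 1) :
    coeff F (insert x t') (insert x t) =
      (-1) ^ #(t'.filter (x < ·)) * ((-1) ^ #(t.filter (x < ·)) * coeff F t' t) := by
  by_cases hts : t ⊆ t'
  · obtain ⟨v, hv⟩ := card_eq_one.1 (show #(t' \ t) = 1 by rw [card_sdiff_of_subset hts]; omega)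
    have hvt : v ∉ t := (mem_sdiff.1 (hv ▸ mem_singleton_self v)).2
    have ht' : t' = insert v t := by
      rw [← sdiff_union_of_subset hts, hv, insert_eq]
    subst ht'
    have hxv : x ≠ v := fun h => hxt' (h ▸ mem_insert_self v t)
    rw [insert_comm, coeff_insert_self F (by simp [hxv.symm, hvt]), coeff_insert_self F hvt,
      filter_insert, filter_insert]
    have hsq := neg_one_pow_mul_self_mul F #(t.filter (x < ·)) 1
    by_cases hlt : x < v
    · simp only [hlt, if_true, card_insert_of_notMem (fun h => hxt (mem_filter.1 h).1),
        card_insert_of_notMem (fun h => hvt (mem_filter.1 h).1), pow_succ]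
      linear_combination (-1 : F) ^ #(t.filter (· < v)) * hsq
    · simp only [hlt, if_false]
      linear_combination -(-1 : F) ^ #(t.filter (· < v)) * hsq
  · have hsub : ¬ insert x t ⊆ insert x t' := fun h =>
      hts ((subset_insert_iff_of_notMem hxt).1 ((subset_insert x t).trans h))
    rw [coeff, if_neg hsub, coeff, if_neg hts, mul_zero, mul_zero]

lemma singleton_mem_faces {K : SC V} {v : V} (hv : v ∈ K.verts) : {v} ∈ K.faces := by
  obtain ⟨s, hs, hvs⟩ := mem_verts_iff.1 hv
  exact K.down_closed s hs _ (singleton_subset_iff.2 hvs)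

/-- `bd F (K.cf 1) (K.cf 0)` is the augmentation `C₀(K) → C₋₁(K)`. -/
lemma finrank_range_bd_cf_one (K : SC V) :
    Module.finrank F (LinearMap.range (bd F (K.cf 1) (K.cf 0))) =
      if (K.cf 1).Nonempty then 1 else 0 := by
  split_ifs with hK
  · obtain ⟨s, hs⟩ := hK
    have h0 := cf_zero_eq_singleton_empty (mem_cf.1 hs).1
    have hempty : (∅ : Finset V) ∈ K.cf 0 := h0 ▸ mem_singleton_self ∅
    obtain ⟨v, rfl⟩ := card_eq_one.1 (mem_cf.1 hs).2
    apply le_antisymm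
    · calc _ ≤ Module.finrank F ({t // t ∈ K.cf 0} → F) := Submodule.finrank_le _
        _ = 1 := by simp [h0]
    · rw [Submodule.one_le_finrank_iff]
      intro hbot
      have hval : bd F (K.cf 1) (K.cf 0) (Pi.single ⟨{v}, hs⟩ 1) ⟨∅, hempty⟩ = 1 := by
        simp [bd, Pi.single_apply, coeff]
      have hzero := LinearMap.mem_range_self (bd F (K.cf 1) (K.cf 0)) (Pi.single ⟨{v}, hs⟩ 1)
      rw [hbot, Submodule.mem_bot] at hzero
      simp [hzero] at hval
  · rw [not_nonempty_iff_eq_empty.1 hK, LinearMap.range_eq_bot.2 (Subsingleton.elim _ _),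
      finrank_bot]

section Excision

variable (X : SC V) {x : V} {A : Finset V}

lemma mem_rcf_ind_insert_iff (hxA : x ∉ A) {n : ℕ} {s : Finset V} :
    s ∈ (X.ind (insert x A)).rcf (X.ind A) (n + 1) ↔
      x ∈ s ∧ s.erase x ∈ ((X.lk x).ind A).cf n := by
  simp only [mem_rcf, mem_ind_faces, mem_cf, mem_lk_faces, not_and]
  constructor
  · rintro ⟨⟨⟨hs, hsA⟩, hcard⟩, hnot⟩
    have hxs : x ∈ s := by
      by_contra hxs
      exact hnot hs ((subset_insert_iff_of_notMem hxs).1 hsA)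
    refine ⟨hxs, ⟨⟨notMem_erase x s, by rwa [insert_erase hxs]⟩, subset_insert_iff.1 hsA⟩, ?_⟩
    rw [card_erase_of_mem hxs, hcard, Nat.add_sub_cancel]
  · rintro ⟨hxs, ⟨⟨-, hs⟩, hsA⟩, hcard⟩
    rw [insert_erase hxs] at hs
    refine ⟨⟨⟨hs, subset_insert_iff.2 hsA⟩, ?_⟩, fun _ h => hxA (h hxs)⟩
    rw [← hcard, card_erase_add_one hxs]

lemma notMem_of_mem_cf_ind_lk {n : ℕ} {t : Finset V} (ht : t ∈ ((X.lk x).ind A).cf n) :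
    x ∉ t :=
  (mem_lk_faces.1 (mem_ind_faces.1 (mem_cf.1 ht).1).1).1

def relFaceEquiv (hxA : x ∉ A) (n : ℕ) :
    {s // s ∈ (X.ind (insert x A)).rcf (X.ind A) (n + 1)} ≃ {t // t ∈ ((X.lk x).ind A).cf n} where
  toFun s := ⟨s.1.erase x, ((X.mem_rcf_ind_insert_iff hxA).1 s.2).2⟩
  invFun t := ⟨insert x t.1, (X.mem_rcf_ind_insert_iff hxA).2
    ⟨mem_insert_self x t.1, by rw [erase_insert (X.notMem_of_mem_cf_ind_lk t.2)]; exact t.2⟩⟩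
  left_inv s := Subtype.ext (insert_erase ((X.mem_rcf_ind_insert_iff hxA).1 s.2).1)
  right_inv t := Subtype.ext (erase_insert (X.notMem_of_mem_cf_ind_lk t.2))

/-- Excision on chains, twisted by the signs of `coeff_insert_insert`. -/
noncomputable def relChainEquiv (hxA : x ∉ A) (n : ℕ) :
    RelCh F (X.ind (insert x A)) (X.ind A) n ≃ₗ[F] ({t // t ∈ ((X.lk x).ind A).cf n} → F) where
  toFun f t := (-1) ^ #(t.1.filter (x < ·)) * f ((X.relFaceEquiv hxA n).symm t)
  invFun g s := (-1) ^ #((s.1.erase x).filter (x < ·)) * g (X.relFaceEquiv hxA n s)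
  map_add' f g := by
    funext t
    simp [mul_add]
  map_smul' c f := by
    funext t
    simp only [Pi.smul_apply, smul_eq_mul, RingHom.id_apply]
    ring
  left_inv f := by
    funext s
    simp only [Equiv.symm_apply_apply]
    exact neg_one_pow_mul_self_mul F _ (f s)
  right_inv g := by
    funext t
    have hx : ((X.relFaceEquiv hxA n).symm t).1.erase x = t.1 :=
      erase_insert (X.notMem_of_mem_cf_ind_lk t.2)
    simp only [Equiv.apply_symm_apply, hx]
    exact neg_one_pow_mul_self_mul F _ (g t)

lemma relChainEquiv_relD (hxA : x ∉ A) (n : ℕ)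
    (f : RelCh F (X.ind (insert x A)) (X.ind A) (n + 1)) :
    X.relChainEquiv F hxA n (relD F (X.ind (insert x A)) (X.ind A) (n + 1) f) =
      bd F (((X.lk x).ind A).cf (n + 1)) (((X.lk x).ind A).cf n)
        (X.relChainEquiv F hxA (n + 1) f) := by
  funext t
  change (-1 : F) ^ #(t.1.filter (x < ·)) *
      ∑ s, coeff F s.1 ((X.relFaceEquiv hxA n).symm t).1 * f s =
    ∑ u, coeff F u.1 t.1 *
      ((-1) ^ #(u.1.filter (x < ·)) * f ((X.relFaceEquiv hxA (n + 1)).symm u))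
  rw [mul_sum]
  refine Fintype.sum_equiv (X.relFaceEquiv hxA (n + 1)) _ _ fun s => ?_
  obtain ⟨hxs, hs⟩ := (X.mem_rcf_ind_insert_iff hxA).1 s.2
  have hcard : #(s.1.erase x) = #t.1 + 1 := by rw [(mem_cf.1 hs).2, (mem_cf.1 t.2).2]
  have hcoeff := coeff_insert_insert F (X.notMem_of_mem_cf_ind_lk t.2) (notMem_erase x s.1) hcard
  rw [insert_erase hxs] at hcoeff
  change _ * (coeff F s.1 (insert x t.1) * f s) =
    coeff F (s.1.erase x) t.1 * ((-1) ^ #((s.1.erase x).filter (x < ·)) *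
      f ((X.relFaceEquiv hxA (n + 1)).symm (X.relFaceEquiv hxA (n + 1) s)))
  rw [hcoeff, Equiv.symm_apply_apply]
  linear_combination (-1 : F) ^ #((s.1.erase x).filter (x < ·)) * coeff F (s.1.erase x) t.1 *
    f s * neg_one_pow_mul_self_mul F #(t.1.filter (x < ·)) 1

lemma finrank_ker_relD_succ (hxA : x ∉ A) (n : ℕ) :
    Module.finrank F (LinearMap.ker (relD F (X.ind (insert x A)) (X.ind A) (n + 1))) =
      Module.finrank F
        (LinearMap.ker (bd F (((X.lk x).ind A).cf (n + 1)) (((X.lk x).ind A).cf n))) :=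
  LinearMap.finrank_ker_eq_of_comm _ _ (X.relChainEquiv_relD F hxA n)

lemma finrank_range_relD_succ (hxA : x ∉ A) (n : ℕ) :
    Module.finrank F (LinearMap.range (relD F (X.ind (insert x A)) (X.ind A) (n + 1))) =
      Module.finrank F
        (LinearMap.range (bd F (((X.lk x).ind A).cf (n + 1)) (((X.lk x).ind A).cf n))) :=
  LinearMap.finrank_range_eq_of_comm _ _ (X.relChainEquiv_relD F hxA n)

lemma finrank_relCh_zero (hx : x ∈ X.verts) (hxA : x ∉ A) :
    Module.finrank F (RelCh F (X.ind (insert x A)) (X.ind A) 0) = 1 := by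
  have hempty : ∅ ∈ ((X.lk x).ind A).faces :=
    mem_ind_faces.2 ⟨mem_lk_faces.2 ⟨notMem_empty x, singleton_mem_faces hx⟩, empty_subset A⟩
  rw [Module.finrank_pi, Fintype.card_congr (X.relFaceEquiv hxA 0), Fintype.card_coe,
    cf_zero_eq_singleton_empty hempty, card_singleton]

lemma cf_one_ind_lk_nonempty_iff (h2 : X.Neighbourly 2) (hx : x ∈ X.verts) (hA : A ⊆ X.verts)
    (hxA : x ∉ A) : (((X.lk x).ind A).cf 1).Nonempty ↔ A.Nonempty := by
  constructor
  · rintro ⟨s, hs⟩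
    obtain ⟨v, rfl⟩ := card_eq_one.1 (mem_cf.1 hs).2
    exact ⟨v, (mem_ind_faces.1 (mem_cf.1 hs).1).2 (mem_singleton_self v)⟩
  · rintro ⟨v, hv⟩
    have hxv : x ≠ v := fun h => hxA (h ▸ hv)
    refine ⟨{v}, mem_cf.2 ⟨mem_ind_faces.2 ⟨mem_lk_faces.2 ⟨?_, ?_⟩, ?_⟩, card_singleton v⟩⟩
    · simpa using hxv
    · exact pair_mem_faces h2 hx (hA hv) hxv
    · exact singleton_subset_iff.2 hv

lemma finrank_range_bd_cf_one_ind_lk (h2 : X.Neighbourly 2) (hx : x ∈ X.verts)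
    (hA : A ⊆ X.verts) (hxA : x ∉ A) :
    Module.finrank F (LinearMap.range (bd F (((X.lk x).ind A).cf 1) (((X.lk x).ind A).cf 0))) =
      if A = ∅ then 0 else 1 := by
  rw [finrank_range_bd_cf_one, if_congr (X.cf_one_ind_lk_nonempty_iff h2 hx hA hxA) rfl rfl]
  by_cases hA0 : A = ∅ <;> simp [hA0, nonempty_iff_ne_empty]

theorem relBetti_ind_insert_zero (h2 : X.Neighbourly 2) (hx : x ∈ X.verts) (hA : A ⊆ X.verts)
    (hxA : x ∉ A) : relBetti F (X.ind (insert x A)) (X.ind A) 0 = if A = ∅ then 1 else 0 := by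
  have hker : LinearMap.ker (relD F (X.ind (insert x A)) (X.ind A) 0) = ⊤ := LinearMap.ker_zero
  rw [relBetti, hker, finrank_top, X.finrank_relCh_zero F hx hxA, X.finrank_range_relD_succ F hxA 0,
    X.finrank_range_bd_cf_one_ind_lk F h2 hx hA hxA]
  split_ifs <;> rfl

theorem relBetti_ind_insert_one (h2 : X.Neighbourly 2) (hx : x ∈ X.verts) (hA : A ⊆ X.verts)
    (hxA : x ∉ A) :
    relBetti F (X.ind (insert x A)) (X.ind A) 1 =
      rbetti F ((X.lk x).ind A) 0 + if A = ∅ then 1 else 0 := by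
  have hε := (bd F (((X.lk x).ind A).cf 1) (((X.lk x).ind A).cf 0)).finrank_range_add_finrank_ker
  rw [X.finrank_range_bd_cf_one_ind_lk F h2 hx hA hxA, Module.finrank_pi, Fintype.card_coe] at hε
  have hker : LinearMap.ker (D F ((X.lk x).ind A) 0) = ⊤ := LinearMap.ker_zero
  rw [relBetti, X.finrank_ker_relD_succ F hxA 0, X.finrank_range_relD_succ F hxA 1, rbetti, betti,
    hker, finrank_top, Module.finrank_pi, Fintype.card_coe, if_pos rfl]
  -- unfold `0 + 1` and `D F _ 1` to the forms occurring in `hε`, so that `omega` sees one atom each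
  change (Module.finrank F (LinearMap.ker (bd F (((X.lk x).ind A).cf 1) (((X.lk x).ind A).cf 0)))
      - Module.finrank F (LinearMap.range (bd F (((X.lk x).ind A).cf 2) (((X.lk x).ind A).cf 1)))
      : ℤ) = #(((X.lk x).ind A).cf 1)
      - Module.finrank F (LinearMap.range (bd F (((X.lk x).ind A).cf 2) (((X.lk x).ind A).cf 1)))
      - 1 + if A = ∅ then 1 else 0
  split_ifs at hε ⊢ <;> omega

theorem relBetti_ind_insert_add_two (hxA : x ∉ A) (k : ℕ) :
    relBetti F (X.ind (insert x A)) (X.ind A) (k + 2) = rbetti F ((X.lk x).ind A) (k + 1) := by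
  rw [relBetti, X.finrank_ker_relD_succ F hxA (k + 1), X.finrank_range_relD_succ F hxA (k + 2),
    rbetti, if_neg (Nat.succ_ne_zero k), sub_zero]
  rfl

end Excision

lemma sigma_eq_sumLevelAvg (K : SC V) (i : ℕ) :
    sigma F K i = sumLevelAvg K.verts (fun A => rbetti F (K.ind A) i) := rfl

lemma sumLevelAvg_relBetti_ind_insert (X : SC V) (h2 : X.Neighbourly 2) {x : V} (hx : x ∈ X.verts)
    (i : ℕ) :
    sumLevelAvg (X.verts.erase x) (fun C => (relBetti F (X.ind (insert x C)) (X.ind C) i : ℚ)) =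
      (if i = 0 then 0 else sigma F (X.lk x) (i - 1)) + if i ≤ 1 then 1 else 0 := by
  have hC : ∀ C ⊆ X.verts.erase x, C ⊆ X.verts ∧ x ∉ C := fun C hC => subset_erase.1 hC
  rw [sigma_eq_sumLevelAvg, verts_lk X h2 hx]
  match i with
  | 0 =>
    rw [sumLevelAvg_congr fun C hC' => by
      push_cast [X.relBetti_ind_insert_zero F h2 hx (hC C hC').1 (hC C hC').2]; rfl]
    simp [sumLevelAvg_indicator_empty]
  | 1 =>
    rw [sumLevelAvg_congr fun C hC' => by
      push_cast [X.relBetti_ind_insert_one F h2 hx (hC C hC').1 (hC C hC').2]; rfl]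
    simp [sumLevelAvg_add, sumLevelAvg_indicator_empty]
  | k + 2 =>
    rw [sumLevelAvg_congr fun C hC' => by rw [X.relBetti_ind_insert_add_two F (hC C hC').2]]
    simp

end SC

/-- Lemma 2.4: for a `2`-neighbourly `d`-dimensional simplicial complex `X` on `m`
vertices, `μ_i = (1/m) ∑_{j=1}^{m} (1/C(m-1,j-1)) ∑_{A ⋖ B, |B| = j} β_i(X[B], X[A])`,
the inner sum ranging over pairs `A ⊆ B ⊆ V(X)` with `|B| = j`, `|B ∖ A| = 1`. -/
theorem mu_as_relative_betti {V : Type} [LinearOrder V] (F : Type) [Field F]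
    (d : ℕ) (X : SC V) (hd : X.dimIs d) (h2 : X.Neighbourly 2) :
    ∀ i ≤ d, SC.mu F X i =
      (1 / (X.verts.card : ℚ)) * ∑ j ∈ Finset.Icc 1 X.verts.card,
        (1 / (((X.verts.card - 1).choose (j - 1)) : ℚ)) *
          ∑ B ∈ X.verts.powersetCard j, ∑ A ∈ B.powersetCard (j - 1),
            (SC.relBetti F (X.ind B) (X.ind A) i : ℚ) := by
  intro i _
  obtain ⟨⟨s, hs, hcard⟩, -⟩ := hd
  obtain ⟨v, hv⟩ := card_pos.1 (show 0 < #s by omega)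
  have hm : (#X.verts : ℚ) ≠ 0 :=
    Nat.cast_ne_zero.2 (card_ne_zero_of_mem (SC.mem_verts_iff.2 ⟨s, hs, hv⟩))
  rw [SC.sum_Icc_choose_pairs_eq_sum_sumLevelAvg,
    sum_congr rfl fun y hy => SC.sumLevelAvg_relBetti_ind_insert F X h2 hy i, sum_add_distrib,
    sum_const, nsmul_eq_mul]
  rcases i with _ | _ | k <;> simp [SC.mu, add_comm] <;> field_simp
end
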